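/- arXiv:1312.1039 — 2 statements merged into one kernel-verified Lean document; each statement's English description precedes it below -/
import Mathlib

section
/- For Hermitian positive definite matrices A, B, a full-column-rank matrix X ∈ ℂ^{d×k}, and t ∈ [0,1], it holds that trace(X*(A #_t B)X) ≤ [trace(X*AX)]^{1-t} · [trace(X*BX)]^t. -/
/-! With `S = A^{1/2}`, `C = A^{-1/2} B A^{-1/2}` and `Y = S X`, the three traces are
`tr (Yᴴ C^s Y)` for `s = t, 0, 1`. Diagonalising `C = U diag(λ) Uᴴ`, each of them is
`∑ᵢ wᵢ λᵢ^s` with the nonnegative weights `wᵢ = ‖(Uᴴ Y)ᵢ‖²`, so the claim is the weighted Hölder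
inequality `∑ wᵢ λᵢ^t ≤ (∑ wᵢ)^{1-t} (∑ wᵢ λᵢ)^t`. -/

set_option linter.unusedSectionVars false

namespace CGO

open Matrix
open scoped ComplexOrder

variable {n : Type*} [Fintype n] [DecidableEq n]

/-- The Löwner partial order `A ⪯ B` on matrices: `B - A` is positive semidefinite. -/
def LoewnerLE (A B : Matrix n n ℂ) : Prop := (B - A).PosSemidef

lemma cfc_isHermitian {A : Matrix n n ℂ} (hA : A.IsHermitian) (f : ℝ → ℝ) :
    (hA.cfc f).IsHermitian := by
  rw [Matrix.IsHermitian.cfc, Unitary.conjStarAlgAut_apply, Matrix.star_eq_conjTranspose]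
  exact Matrix.isHermitian_mul_mul_conjTranspose _
    (Matrix.isHermitian_diagonal_of_self_adjoint _ (by
      show star _ = _
      funext i; simp [Function.comp]))

/-- Real powers of a Hermitian matrix, defined through the spectral theorem
(for positive definite `A`, this is the usual power `A^t`). -/
noncomputable def mpow {A : Matrix n n ℂ} (hA : A.IsHermitian) (t : ℝ) : Matrix n n ℂ :=
  hA.cfc (fun x => x ^ t)

lemma mpow_isHermitian {A : Matrix n n ℂ} (hA : A.IsHermitian) (t : ℝ) :
    (mpow hA t).IsHermitian := cfc_isHermitian hA _

lemma mul_mul_isHermitian {A B : Matrix n n ℂ} (hA : A.IsHermitian) (hB : B.IsHermitian) :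
    (A * B * A).IsHermitian := by
  have h := Matrix.isHermitian_mul_mul_conjTranspose A hB
  rwa [hA.eq] at h

/-- The weighted matrix geometric mean `A #ₜ B := A^{1/2} (A^{-1/2} B A^{-1/2})^t A^{1/2}`.
The midpoint `t = 1/2` is the matrix geometric mean `A # B`. -/
noncomputable def wgmean {A B : Matrix n n ℂ} (hA : A.PosDef) (hB : B.PosDef) (t : ℝ) :
    Matrix n n ℂ :=
  mpow hA.1 (1/2) *
    mpow (mul_mul_isHermitian (mpow_isHermitian hA.1 (-(1/2))) hB.1) t *
    mpow hA.1 (1/2)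

lemma wgmean_isHermitian {A B : Matrix n n ℂ} (hA : A.PosDef) (hB : B.PosDef) (t : ℝ) :
    (wgmean hA hB t).IsHermitian := by
  have h := mul_mul_isHermitian (mpow_isHermitian hA.1 (1/2))
    (mpow_isHermitian (mul_mul_isHermitian (mpow_isHermitian hA.1 (-(1/2))) hB.1) t)
  simpa [wgmean, mul_assoc] using h

lemma mpow_eq_cfc {A : Matrix n n ℂ} (hA : A.IsHermitian) (t : ℝ) :
    mpow hA t = cfc (fun x : ℝ => x ^ t) A :=
  (hA.cfc_eq _).symm

@[simp]
lemma mpow_zero {A : Matrix n n ℂ} (hA : A.IsHermitian) : mpow hA 0 = 1 := by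
  simp only [mpow_eq_cfc, Real.rpow_zero]
  exact cfc_const_one ℝ A

@[simp]
lemma mpow_one {A : Matrix n n ℂ} (hA : A.IsHermitian) : mpow hA 1 = A := by
  simp only [mpow_eq_cfc, Real.rpow_one]
  exact cfc_id' ℝ A hA.isSelfAdjoint

lemma mpow_mul_mpow {A : Matrix n n ℂ} (hA : A.PosDef) (s t : ℝ) :
    mpow hA.1 s * mpow hA.1 t = mpow hA.1 (s + t) := by
  have hfin := A.finite_real_spectrum
  rw [mpow_eq_cfc, mpow_eq_cfc, mpow_eq_cfc,
    ← cfc_mul _ _ A (hfin.continuousOn _) (hfin.continuousOn _)]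
  refine cfc_congr fun x hx => ?_
  obtain ⟨i, rfl⟩ := hA.1.spectrum_real_eq_range_eigenvalues ▸ hx
  exact (Real.rpow_add (hA.eigenvalues_pos i) s t).symm

lemma exists_re_trace_conj_cfc_eq_sum {k : Type*} [Fintype k] {C : Matrix n n ℂ}
    (hC : C.IsHermitian) (Y : Matrix n k ℂ) :
    ∃ w : n → ℝ, (∀ i, 0 ≤ w i) ∧
      ∀ f : ℝ → ℝ, (Yᴴ * hC.cfc f * Y).trace.re = ∑ i, w i * f (hC.eigenvalues i) := by
  obtain ⟨Z, hZ⟩ : ∃ Z, Z = star (hC.eigenvectorUnitary : Matrix n n ℂ) * Y := ⟨_, rfl⟩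
  refine ⟨fun i => ∑ j, Complex.normSq (Z i j),
    fun i => Finset.sum_nonneg fun j _ => Complex.normSq_nonneg _, fun f => ?_⟩
  have hconj : Yᴴ * hC.cfc f * Y = Zᴴ * diagonal (fun i => (f (hC.eigenvalues i) : ℂ)) * Z := by
    simp only [IsHermitian.cfc, Unitary.conjStarAlgAut_apply, hZ, conjTranspose_mul,
      star_eq_conjTranspose, conjTranspose_conjTranspose, Matrix.mul_assoc]
    rfl
  rw [hconj, trace_mul_cycle, trace]
  simp only [diag_apply, mul_diagonal]
  simp only [Matrix.mul_apply, conjTranspose_apply, Complex.star_def, Complex.mul_conj,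
    ← Complex.ofReal_sum, ← Complex.ofReal_mul, Complex.ofReal_re]

lemma sum_mul_rpow_le {ι : Type*} (s : Finset ι) {w f : ι → ℝ} (hw : ∀ i, 0 ≤ w i)
    (hf : ∀ i, 0 ≤ f i) {t : ℝ} (ht0 : 0 ≤ t) (ht1 : t ≤ 1) :
    ∑ i ∈ s, w i * f i ^ t ≤ (∑ i ∈ s, w i) ^ (1 - t) * (∑ i ∈ s, w i * f i) ^ t := by
  rcases ht0.eq_or_lt with rfl | htpos
  · simp
  have h := Real.inner_le_weight_mul_Lp_of_nonneg s (p := t⁻¹) (one_le_inv₀ htpos |>.mpr ht1) w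
    (fun i => f i ^ t) hw fun i => Real.rpow_nonneg (hf i) t
  simpa only [inv_inv, ← Real.rpow_mul (hf _), mul_inv_cancel₀ htpos.ne', Real.rpow_one] using h

lemma re_trace_conj_mpow_le {k : Type*} [Fintype k] {C : Matrix n n ℂ} (hC : C.PosSemidef)
    (Y : Matrix n k ℂ) {t : ℝ} (ht0 : 0 ≤ t) (ht1 : t ≤ 1) :
    (Yᴴ * mpow hC.1 t * Y).trace.re ≤
      (Yᴴ * Y).trace.re ^ (1 - t) * (Yᴴ * C * Y).trace.re ^ t := by
  obtain ⟨w, hw, htrace⟩ := exists_re_trace_conj_cfc_eq_sum hC.1 Y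
  have hY : Yᴴ * Y = Yᴴ * mpow hC.1 0 * Y := by rw [mpow_zero, Matrix.mul_one]
  have hCY : Yᴴ * C * Y = Yᴴ * mpow hC.1 1 * Y := by rw [mpow_one]
  rw [hY, hCY]
  simp only [mpow, htrace, Real.rpow_zero, Real.rpow_one, mul_one]
  exact sum_mul_rpow_le Finset.univ hw hC.eigenvalues_nonneg ht0 ht1

theorem trace_wgmean_le_geom_general {d k : ℕ} {A B : Matrix (Fin d) (Fin d) ℂ}
    (hA : A.PosDef) (hB : B.PosDef) (X : Matrix (Fin d) (Fin k) ℂ)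
    {t : ℝ} (ht : t ∈ Set.Icc (0 : ℝ) 1) :
    (Matrix.trace (Xᴴ * wgmean hA hB t * X)).re ≤
      (Matrix.trace (Xᴴ * A * X)).re ^ (1 - t) * (Matrix.trace (Xᴴ * B * X)).re ^ t := by
  set S := mpow hA.1 (1 / 2)
  set S' := mpow hA.1 (-(1 / 2))
  have hS : Sᴴ = S := mpow_isHermitian hA.1 _
  have hS' : S'ᴴ = S' := mpow_isHermitian hA.1 _
  have hSS : S * S = A := by rw [mpow_mul_mpow hA]; norm_num
  have hSS' : S * S' = 1 := by rw [mpow_mul_mpow hA]; norm_num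
  have hS'S : S' * S = 1 := by rw [mpow_mul_mpow hA]; norm_num
  have hC : (S' * B * S').PosSemidef := by
    simpa only [hS'] using hB.posSemidef.mul_mul_conjTranspose_same S'
  have hwgmean : Xᴴ * wgmean hA hB t * X = (S * X)ᴴ * mpow hC.1 t * (S * X) := by
    simp only [wgmean, conjTranspose_mul, hS, Matrix.mul_assoc]
    rfl -- `mpow` of `S' * B * S'` under two proofs of Hermitianity
  have hAX : Xᴴ * A * X = (S * X)ᴴ * (S * X) := by
    simp only [← hSS, conjTranspose_mul, hS, Matrix.mul_assoc]
  have hBX : Xᴴ * B * X = (S * X)ᴴ * (S' * B * S') * (S * X) := by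
    simp only [conjTranspose_mul, hS, Matrix.mul_assoc]
    rw [← Matrix.mul_assoc S S', hSS', Matrix.one_mul, ← Matrix.mul_assoc S' S, hS'S,
      Matrix.one_mul]
  rw [hwgmean, hAX, hBX]
  exact re_trace_conj_mpow_le hC (S * X) ht.1 ht.2

/-- `trace(X*(A #ₜ B)X) ≤ [trace(X*AX)]^{1-t} [trace(X*BX)]^t`. -/
theorem trace_wgmean_le_geom {d k : ℕ} {A B : Matrix (Fin d) (Fin d) ℂ}
    (hA : A.PosDef) (hB : B.PosDef) (X : Matrix (Fin d) (Fin k) ℂ)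
    (hX : Function.Injective X.mulVecLin)
    {t : ℝ} (ht : t ∈ Set.Icc (0 : ℝ) 1) :
    (Matrix.trace (Xᴴ * wgmean hA hB t * X)).re ≤
      (Matrix.trace (Xᴴ * A * X)).re ^ (1 - t) * (Matrix.trace (Xᴴ * B * X)).re ^ t :=
  trace_wgmean_le_geom_general hA hB X ht

end CGO
end

section
/- Power nonexpansivity of the Thompson metric: for Hermitian positive definite X, Y and t ∈ [−1,1], δ_T(X^t, Y^t) ≤ |t| · δ_T(X,Y). -/
set_option linter.unusedSectionVars false

namespace CGO

open Matrix
open scoped ComplexOrder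

variable {n : Type*} [Fintype n] [DecidableEq n]

/-- `wfac A B = W(A/B) = inf {λ > 0 : A ⪯ λ B}`. -/
noncomputable def wfac (A B : Matrix n n ℂ) : ℝ :=
  sInf {l : ℝ | 0 < l ∧ ((l : ℝ) • B - A).PosSemidef}

/-- The Thompson part metric on positive definite matrices,
`δ_T(A,B) = ‖log(B^{-1/2} A B^{-1/2})‖ = max (log W(A/B)) (log W(B/A))`. -/
noncomputable def thompson (A B : Matrix n n ℂ) : ℝ :=
  max (Real.log (wfac A B)) (Real.log (wfac B A))

/-!
Conjugating by `B^{-1/2}` shows `W(A/B) = ‖B^{-1/2} A B^{-1/2}‖`, so the infimum defining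
`W(A/B)` is attained and positive. For `t ∈ [0, 1]` the Löwner–Heinz inequality turns
`A ≤ W(A/B) B` into `A^t ≤ W(A/B)^t B^t`, i.e. `W(A^t/B^t) ≤ W(A/B)^t`. For `t ∈ [-1, 0]` one
inverts as well (inversion reverses the Löwner order), so `B ≤ W(B/A) A` gives
`W(A^t/B^t) ≤ W(B/A)^{-t}`. Taking logarithms bounds both terms of `δ_T(A^t, B^t)` by
`|t| δ_T(A, B)`.
-/

section CStarAlgebra

open CFC

variable {A : Type*} [CStarAlgebra A] [PartialOrder A] [StarOrderedRing A]

lemma smul_rpow {c : ℝ} (hc : 0 < c) {b : A} (hb : IsStrictlyPositive b) (p : ℝ) :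
    (c • b) ^ p = c ^ p • b ^ p := by
  have hpos : spectrum ℝ b ⊆ Set.Ioi 0 := fun x hx => hb.spectrum_pos hx
  have hcont : ContinuousOn (fun x : ℝ => x ^ p) (Set.Ioi 0) :=
    continuousOn_id.rpow_const fun x hx => .inl (ne_of_gt hx)
  rw [rpow_eq_cfc_real (hb.smul hc).nonneg, rpow_eq_cfc_real hb.nonneg,
    ← cfc_comp_smul c _ b (hcont.mono ?_), ← cfc_const_mul _ _ b (hcont.mono hpos)]
  · exact cfc_congr fun x hx => Real.mul_rpow hc.le (hpos hx).le
  · rintro _ ⟨x, hx, rfl⟩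
    exact smul_pos hc (Set.mem_Ioi.mp (hpos hx))

lemma rpow_le_smul_rpow {p : ℝ} (hp : p ∈ Set.Icc 0 1) {c : ℝ} (hc : 0 < c) {a b : A}
    (hb : IsStrictlyPositive b) (hab : a ≤ c • b) : a ^ p ≤ c ^ p • b ^ p :=
  smul_rpow hc hb p ▸ rpow_le_rpow hp hab

lemma rpow_neg_le_smul_rpow_neg {p : ℝ} (hp : p ∈ Set.Icc 0 1) {c : ℝ} (hc : 0 < c) {a b : A}
    (ha : IsStrictlyPositive a) (hb : IsStrictlyPositive b) (hab : a ≤ c • b) :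
    b ^ (-p) ≤ c ^ p • a ^ (-p) := by
  rcases eq_or_ne p 0 with rfl | hp0
  · simp [rpow_zero a ha.nonneg, rpow_zero b hb.nonneg]
  have h := CStarAlgebra.rpow_neg_one_le_rpow_neg_one (rpow_le_smul_rpow hp hc hb hab)
    (ha.rpow a p)
  rw [smul_rpow (Real.rpow_pos_of_pos hc p) (hb.rpow b p), rpow_rpow b _ _ hp0 hb,
    rpow_rpow a _ _ hp0 ha, ← Real.rpow_mul hc.le, mul_neg_one] at h
  simpa [smul_smul, ← Real.rpow_add hc] using
    smul_le_smul_of_nonneg_left h (Real.rpow_nonneg hc.le p)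

lemma le_smul_iff_norm_conj_le {a b : A} (ha : 0 ≤ a) (hb : IsStrictlyPositive b) {r : ℝ}
    (hr : 0 ≤ r) :
    a ≤ r • b ↔ ‖b ^ (-(1 / 2) : ℝ) * a * b ^ (-(1 / 2) : ℝ)‖ ≤ r := by
  set u := b ^ (-(1 / 2) : ℝ)
  have hu : IsUnit u := (hb.rpow b _).isUnit
  have hus : star u = u := (IsSelfAdjoint.of_nonneg rpow_nonneg).star_eq
  have hconj : u * (r • b - a) * star u = algebraMap ℝ A r - u * a * u := by
    rw [hus, mul_sub, sub_mul, mul_smul_comm, smul_mul_assoc, conjugate_rpow_neg_one_half b hb,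
      Algebra.algebraMap_eq_smul_one]
  rw [CStarAlgebra.norm_le_iff_le_algebraMap _ hr (conjugate_nonneg_of_nonneg ha rpow_nonneg),
    ← sub_nonneg, ← hu.star_right_conjugate_nonneg_iff, hconj, sub_nonneg]

lemma norm_conj_rpow_neg_half_pos [Nontrivial A] {a b : A} (ha : IsStrictlyPositive a)
    (hb : IsStrictlyPositive b) : 0 < ‖b ^ (-(1 / 2) : ℝ) * a * b ^ (-(1 / 2) : ℝ)‖ := by
  have hu : IsUnit (b ^ (-(1 / 2) : ℝ)) := (hb.rpow b _).isUnit
  have hus : star (b ^ (-(1 / 2) : ℝ)) = b ^ (-(1 / 2) : ℝ) :=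
    (IsSelfAdjoint.of_nonneg rpow_nonneg).star_eq
  have hconj := hu.isStrictlyPositive_star_right_conjugate_iff.mpr ha
  rw [hus] at hconj
  exact norm_pos_iff.mpr hconj.isUnit.ne_zero

end CStarAlgebra

section Thompson

open scoped Matrix.Norms.L2Operator MatrixOrder

lemma mpow_eq_rpow {A : Matrix n n ℂ} (hA : A.PosDef) (t : ℝ) : mpow hA.1 t = A ^ t := by
  rw [mpow, ← hA.1.cfc_eq, CFC.rpow_eq_cfc_real hA.posSemidef.nonneg]

variable {A B : Matrix n n ℂ}

lemma wfac_le {l : ℝ} (hl : 0 < l) (h : A ≤ l • B) : wfac A B ≤ l :=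
  csInf_le ⟨0, fun _ hx => hx.1.le⟩ ⟨hl, h⟩

lemma wfac_eq_norm [Nonempty n] (hA : IsStrictlyPositive A) (hB : IsStrictlyPositive B) :
    wfac A B = ‖B ^ (-(1 / 2) : ℝ) * A * B ^ (-(1 / 2) : ℝ)‖ := by
  have hpos := norm_conj_rpow_neg_half_pos hA hB
  have hset : {l : ℝ | 0 < l ∧ (l • B - A).PosSemidef}
      = Set.Ici ‖B ^ (-(1 / 2) : ℝ) * A * B ^ (-(1 / 2) : ℝ)‖ := by
    ext l
    refine ⟨fun ⟨hl, h⟩ => (le_smul_iff_norm_conj_le hA.nonneg hB hl.le).mp h, fun h => ?_⟩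
    have hl := hpos.trans_le h
    exact ⟨hl, (le_smul_iff_norm_conj_le hA.nonneg hB hl.le).mpr h⟩
  rw [wfac, hset, csInf_Ici]

lemma wfac_pos [Nonempty n] (hA : IsStrictlyPositive A) (hB : IsStrictlyPositive B) :
    0 < wfac A B :=
  wfac_eq_norm hA hB ▸ norm_conj_rpow_neg_half_pos hA hB

lemma le_wfac_smul [Nonempty n] (hA : IsStrictlyPositive A) (hB : IsStrictlyPositive B) :
    A ≤ wfac A B • B :=
  (le_smul_iff_norm_conj_le hA.nonneg hB (wfac_pos hA hB).le).mpr (wfac_eq_norm hA hB).ge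

lemma thompson_comm (A B : Matrix n n ℂ) : thompson A B = thompson B A := max_comm _ _

lemma wfac_of_isEmpty [IsEmpty n] (A B : Matrix n n ℂ) : wfac A B = 0 := by
  have hset : {l : ℝ | 0 < l ∧ (l • B - A).PosSemidef} = Set.Ioi 0 := by
    ext l
    simp [Subsingleton.elim (l • B - A) 0, Matrix.PosSemidef.zero]
  rw [wfac, hset, csInf_Ioi]

lemma thompson_of_isEmpty [IsEmpty n] : thompson A B = 0 := by
  simp [thompson, wfac_of_isEmpty]

lemma wfac_rpow_le [Nonempty n] (hA : IsStrictlyPositive A) (hB : IsStrictlyPositive B)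
    {t : ℝ} (ht : t ∈ Set.Icc (0 : ℝ) 1) : wfac (A ^ t) (B ^ t) ≤ wfac A B ^ t :=
  wfac_le (Real.rpow_pos_of_pos (wfac_pos hA hB) t)
    (rpow_le_smul_rpow ht (wfac_pos hA hB) hB (le_wfac_smul hA hB))

lemma wfac_rpow_neg_le [Nonempty n] (hA : IsStrictlyPositive A) (hB : IsStrictlyPositive B)
    {t : ℝ} (ht : t ∈ Set.Icc (0 : ℝ) 1) : wfac (A ^ (-t)) (B ^ (-t)) ≤ wfac B A ^ t :=
  wfac_le (Real.rpow_pos_of_pos (wfac_pos hB hA) t)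
    (rpow_neg_le_smul_rpow_neg ht (wfac_pos hB hA) hB hA (le_wfac_smul hB hA))

lemma log_wfac_rpow_le [Nonempty n] (hA : IsStrictlyPositive A) (hB : IsStrictlyPositive B)
    {t : ℝ} (ht : t ∈ Set.Icc (-1 : ℝ) 1) :
    Real.log (wfac (A ^ t) (B ^ t)) ≤ |t| * thompson A B := by
  have hpos : 0 < wfac (A ^ t) (B ^ t) := wfac_pos (hA.rpow A t) (hB.rpow B t)
  rcases le_total 0 t with ht0 | ht0
  · calc Real.log (wfac (A ^ t) (B ^ t)) ≤ Real.log (wfac A B ^ t) :=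
          Real.log_le_log hpos (wfac_rpow_le hA hB ⟨ht0, ht.2⟩)
      _ = t * Real.log (wfac A B) := Real.log_rpow (wfac_pos hA hB) t
      _ ≤ |t| * thompson A B := by
          rw [abs_of_nonneg ht0]; exact mul_le_mul_of_nonneg_left (le_max_left _ _) ht0
  · have hw := wfac_rpow_neg_le hA hB ⟨neg_nonneg.mpr ht0, neg_le.mp ht.1⟩
    rw [neg_neg] at hw
    calc Real.log (wfac (A ^ t) (B ^ t)) ≤ Real.log (wfac B A ^ (-t)) := Real.log_le_log hpos hw
      _ = -t * Real.log (wfac B A) := Real.log_rpow (wfac_pos hB hA) _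
      _ ≤ |t| * thompson A B := by
          rw [abs_of_nonpos ht0]
          exact mul_le_mul_of_nonneg_left (le_max_right _ _) (neg_nonneg.mpr ht0)

lemma thompson_rpow_le [Nonempty n] (hA : IsStrictlyPositive A) (hB : IsStrictlyPositive B)
    {t : ℝ} (ht : t ∈ Set.Icc (-1 : ℝ) 1) :
    thompson (A ^ t) (B ^ t) ≤ |t| * thompson A B :=
  max_le (log_wfac_rpow_le hA hB ht) (thompson_comm A B ▸ log_wfac_rpow_le hB hA ht)

end Thompson

/-- Power nonexpansivity of the Thompson metric:
`δ_T(X^t, Y^t) ≤ |t| δ_T(X,Y)` for `t ∈ [-1,1]`. -/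
theorem thompson_power {X Y : Matrix n n ℂ} (hX : X.PosDef) (hY : Y.PosDef)
    {t : ℝ} (ht : t ∈ Set.Icc (-1 : ℝ) 1) :
    thompson (mpow hX.1 t) (mpow hY.1 t) ≤ |t| * thompson X Y := by
  rw [mpow_eq_rpow hX, mpow_eq_rpow hY]
  rcases isEmpty_or_nonempty n with hn | hn
  · simp only [thompson_of_isEmpty, mul_zero, le_refl]
  · exact thompson_rpow_le hX.isStrictlyPositive hY.isStrictlyPositive ht

end CGO
end
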